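/- Let C be a planar convex body that is k_C-rotationally symmetric about a point p in its interior, where k_C is a composite integer whose smallest divisor χ greater than 1 satisfies χ ≥ 3. Then d_M(P_a) = d_M(P_b) for all divisors a, b > 1 of k_C (a chain of equalities among the values d_M(P_{k_1}), …, d_M(P_{k_n}) over the divisors k_1 < … < k_n of k_C greater than 1) if and only if d_M(P_χ) = R. -/

import Mathlib

open Metric Set

/-- Rotation of angle `α` about the point `p` in the plane `ℂ`. -/
noncomputable def rot (p : ℂ) (α : ℝ) : ℂ → ℂ :=
  fun z => p + Complex.exp (α * Complex.I) * (z - p)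

/-- A planar convex body: a compact convex subset of the plane with nonempty interior. -/
def IsConvexBody (C : Set ℂ) : Prop :=
  IsCompact C ∧ Convex ℝ C ∧ (interior C).Nonempty

/-- `C` is `k`-rotationally symmetric about `p`: the rotation of angle `2π/k`
about `p` maps `C` onto itself. -/
def IsRotSym (C : Set ℂ) (p : ℂ) (k : ℕ) : Prop :=
  rot p (2 * Real.pi / k) '' C = C

/-- The closed convex sector at `p` spanned by `x - p` and `ρ_k(x) - p`. -/
noncomputable def sector (p x : ℂ) (k : ℕ) : Set ℂ :=
  {z | ∃ a b : ℝ, 0 ≤ a ∧ 0 ≤ b ∧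
    z = p + (a : ℂ) * (x - p) + (b : ℂ) * (rot p (2 * Real.pi / k) x - p)}

/-- The maximum relative diameter of the standard `k`-partition of `C`
(with center `p` and endpoint `x`): the diameter of one piece `C ∩ S_k`. -/
noncomputable def dM (C : Set ℂ) (p x : ℂ) (k : ℕ) : ℝ :=
  Metric.diam (C ∩ sector p x k)

/-- The circumradius of `C` with respect to `p`: `sup_{y ∈ C} dist p y`. -/
noncomputable def circumrad (C : Set ℂ) (p : ℂ) : ℝ :=
  ⨆ y ∈ C, dist p y

/-!
Sectors shrink as `k` grows, so `d_M(P_a)` is antitone along the divisors `a ≥ χ ≥ 3` of `k_C`,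
and all these values agree iff the smallest one, `d_M(P_χ)`, equals the largest, `d_M(P_{k_C})`.
The latter is `R` because `k_C ≥ χ² ≥ 9`: two points of a sector of angle at most `π / 3` lying
within `R` of its apex are within `R` of each other (law of cosines), while a farthest point of `C`
from `p`, rotated into the sector by the symmetry, lies at distance `R` from the apex `p`.
-/

open scoped Real RealInnerProductSpace ComplexConjugate

section InnerProduct

variable {E : Type*} [NormedAddCommGroup E] [InnerProductSpace ℝ E]

-- `‖u‖ * ‖w‖ ≤ 2 * ⟪u, w⟫` says that `u` and `w` make an angle of at most `π / 3`.
theorem norm_sub_le_of_norm_mul_norm_le_two_mul_inner {u w : E} {R : ℝ} (hu : ‖u‖ ≤ R)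
    (hw : ‖w‖ ≤ R) (huw : ‖u‖ * ‖w‖ ≤ 2 * ⟪u, w⟫) : ‖u - w‖ ≤ R := by
  have hR : 0 ≤ R := (norm_nonneg u).trans hu
  rw [← pow_le_pow_iff_left₀ (norm_nonneg _) hR two_ne_zero, norm_sub_sq_real]
  rcases le_total ‖u‖ ‖w‖ with h | h
  · nlinarith [norm_nonneg u]
  · nlinarith [norm_nonneg w]

theorem norm_mul_norm_le_two_mul_inner_of_nonneg_comb {s t : E} (hst : ‖s‖ = ‖t‖)
    (hangle : ‖s‖ ^ 2 ≤ 2 * ⟪s, t⟫) {a₁ b₁ a₂ b₂ : ℝ} (ha₁ : 0 ≤ a₁) (hb₁ : 0 ≤ b₁)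
    (ha₂ : 0 ≤ a₂) (hb₂ : 0 ≤ b₂) :
    ‖a₁ • s + b₁ • t‖ * ‖a₂ • s + b₂ • t‖ ≤ 2 * ⟪a₁ • s + b₁ • t, a₂ • s + b₂ • t⟫ := by
  have hnorm : ∀ {a b : ℝ}, 0 ≤ a → 0 ≤ b → ‖a • s + b • t‖ ≤ (a + b) * ‖s‖ := fun {a b} ha hb =>
    calc ‖a • s + b • t‖ ≤ ‖a • s‖ + ‖b • t‖ := norm_add_le _ _
      _ = (a + b) * ‖s‖ := by
        rw [norm_smul, norm_smul, ← hst, Real.norm_of_nonneg ha, Real.norm_of_nonneg hb]; ring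
  have hinner : ⟪a₁ • s + b₁ • t, a₂ • s + b₂ • t⟫
      = (a₁ * a₂ + b₁ * b₂) * ‖s‖ ^ 2 + (a₁ * b₂ + b₁ * a₂) * ⟪s, t⟫ := by
    simp only [inner_add_left, inner_add_right, real_inner_smul_left, real_inner_smul_right,
      real_inner_self_eq_norm_sq, real_inner_comm s t, ← hst]
    ring
  calc ‖a₁ • s + b₁ • t‖ * ‖a₂ • s + b₂ • t‖ ≤ ((a₁ + b₁) * ‖s‖) * ((a₂ + b₂) * ‖s‖) :=
        mul_le_mul (hnorm ha₁ hb₁) (hnorm ha₂ hb₂) (norm_nonneg _) (by positivity)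
    _ ≤ 2 * ⟪a₁ • s + b₁ • t, a₂ • s + b₂ • t⟫ := by
        rw [hinner]
        nlinarith [mul_nonneg ha₁ ha₂, mul_nonneg hb₁ hb₂, mul_nonneg ha₁ hb₂,
          mul_nonneg hb₁ ha₂, sq_nonneg ‖s‖]

end InnerProduct

namespace Complex

theorem exists_exp_mul_I_eq_nonneg_comb {γ θ : ℝ} (hγ : 0 ≤ γ) (hγθ : γ ≤ θ) (hθ : θ < π) :
    ∃ c d : ℝ, 0 ≤ c ∧ 0 ≤ d ∧ exp (γ * I) = c + d * exp (θ * I) := by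
  rcases (hγ.trans hγθ).eq_or_lt with hθ0 | hθ0
  · obtain rfl : γ = 0 := le_antisymm (hθ0 ▸ hγθ) hγ
    exact ⟨1, 0, zero_le_one, le_rfl, by simp⟩
  have hsin : 0 < Real.sin θ := Real.sin_pos_of_pos_of_lt_pi hθ0 hθ
  -- the sine rule in the triangle with vertices `0`, `1` and `exp (θ * I)`
  refine ⟨Real.sin (θ - γ) / Real.sin θ, Real.sin γ / Real.sin θ,
    div_nonneg (Real.sin_nonneg_of_nonneg_of_le_pi (by linarith) (by linarith)) hsin.le,
    div_nonneg (Real.sin_nonneg_of_nonneg_of_le_pi hγ (by linarith)) hsin.le, ?_⟩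
  apply Complex.ext <;>
    simp only [exp_ofReal_mul_I_re, exp_ofReal_mul_I_im, add_re, add_im, mul_re, mul_im,
      ofReal_re, ofReal_im, Real.sin_sub] <;>
    field_simp <;> ring

end Complex

open Complex

theorem rot_sub_self (p : ℂ) (α : ℝ) (z : ℂ) : rot p α z - p = exp (α * I) * (z - p) := by
  simp [rot]

theorem rot_zero (p : ℂ) : rot p 0 = id := by
  ext z
  simp [rot]

theorem rot_add (p : ℂ) (α β : ℝ) : rot p (α + β) = rot p α ∘ rot p β := by
  ext z
  simp only [rot, Function.comp_apply, add_sub_cancel_left, ofReal_add, add_mul, exp_add]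
  ring

theorem dist_rot (p : ℂ) (α : ℝ) (z : ℂ) : dist p (rot p α z) = dist p z := by
  rw [dist_comm, dist_eq, rot_sub_self, norm_mul, norm_exp_ofReal_mul_I, one_mul, ← dist_eq,
    dist_comm]

theorem IsRotSym.image_rot_int_mul {C : Set ℂ} {p : ℂ} {k : ℕ} (h : IsRotSym C p k) (m : ℤ) :
    rot p (m * (2 * π / k)) '' C = C := by
  have hinv : rot p (-(2 * π / k)) '' C = C := by
    conv_lhs => rw [← h, ← image_comp, ← rot_add, neg_add_cancel, rot_zero, image_id]
  induction m using Int.induction_on with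
  | zero => simp [rot_zero]
  | succ m ih =>
    rw [Int.cast_add, Int.cast_one, add_one_mul, add_comm, rot_add, image_comp, ih, h]
  | pred m ih =>
    rw [Int.cast_sub, Int.cast_one, sub_one_mul, sub_eq_neg_add, rot_add, image_comp, ih, hinv]

theorem self_mem_sector (p x : ℂ) (k : ℕ) : p ∈ sector p x k :=
  ⟨0, 0, le_rfl, le_rfl, by simp⟩

theorem two_pi_div_lt_pi {k : ℕ} (hk : 3 ≤ k) : 2 * π / k < π := by
  have hk' : (3 : ℝ) ≤ k := by exact_mod_cast hk
  rw [div_lt_iff₀ (by linarith)]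
  nlinarith [Real.pi_pos]

theorem add_mul_exp_mem_sector (p x : ℂ) {k : ℕ} (hk : 3 ≤ k) {t γ : ℝ} (ht : 0 ≤ t)
    (hγ : 0 ≤ γ) (hγk : γ ≤ 2 * π / k) : p + t * exp (γ * I) * (x - p) ∈ sector p x k := by
  obtain ⟨c, d, hc, hd, hexp⟩ := exists_exp_mul_I_eq_nonneg_comb hγ hγk (two_pi_div_lt_pi hk)
  refine ⟨t * c, t * d, mul_nonneg ht hc, mul_nonneg ht hd, ?_⟩
  rw [rot_sub_self, hexp]
  push_cast
  ring

theorem sector_anti (p x : ℂ) {m n : ℕ} (hm : 3 ≤ m) (hmn : m ≤ n) :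
    sector p x n ⊆ sector p x m := by
  rintro _ ⟨a, b, ha, hb, rfl⟩
  have hm' : (0 : ℝ) < m := by exact_mod_cast (by omega : 0 < m)
  obtain ⟨c, d, hc, hd, hexp⟩ : ∃ c d : ℝ, 0 ≤ c ∧ 0 ≤ d ∧ rot p (2 * π / n) x - p
      = c * (x - p) + d * (rot p (2 * π / m) x - p) := by
    obtain ⟨c, d, hc, hd, hdec⟩ := exists_exp_mul_I_eq_nonneg_comb (γ := 2 * π / n)
      (by positivity) (div_le_div_of_nonneg_left Real.two_pi_pos.le hm' (by exact_mod_cast hmn))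
      (two_pi_div_lt_pi hm)
    exact ⟨c, d, hc, hd, by rw [rot_sub_self, rot_sub_self, hdec]; ring⟩
  refine ⟨a + b * c, b * d, by positivity, by positivity, ?_⟩
  rw [hexp]
  push_cast
  ring

theorem exists_rot_int_mul_mem_sector {p x : ℂ} {k : ℕ} (hk : 3 ≤ k) (hxp : x ≠ p) (y : ℂ) :
    ∃ m : ℤ, rot p (m * (2 * π / k)) y ∈ sector p x k := by
  have hθ : 0 < 2 * π / k := by
    have : (0 : ℝ) < k := by exact_mod_cast (by omega : 0 < k)
    positivity
  set w := (y - p) / (x - p)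
  -- `toIcoMod` moves `arg w` into `[0, 2π/k)` by an integer multiple of `2π/k`
  obtain ⟨hγ, hγk⟩ := toIcoMod_mem_Ico' hθ w.arg
  refine ⟨-toIcoDiv hθ 0 w.arg, ?_⟩
  convert add_mul_exp_mem_sector p x hk (norm_nonneg w) hγ hγk.le using 1
  have hy : y - p = ‖w‖ * exp (w.arg * I) * (x - p) := by
    rw [norm_mul_exp_arg_mul_I, div_mul_cancel₀ _ (sub_ne_zero_of_ne hxp)]
  rw [← self_sub_toIcoDiv_zsmul, zsmul_eq_mul, rot, hy]
  push_cast
  rw [show ((w.arg : ℂ) - toIcoDiv hθ 0 w.arg * (2 * π / k)) * I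
    = -toIcoDiv hθ 0 w.arg * (2 * π / k) * I + w.arg * I by ring, exp_add]
  ring

theorem half_le_cos_two_pi_div {k : ℕ} (hk : 6 ≤ k) : 1 / 2 ≤ Real.cos (2 * π / k) := by
  have hk' : (6 : ℝ) ≤ k := by exact_mod_cast hk
  have hθ : 2 * π / k ≤ π / 3 := by
    rw [div_le_div_iff₀ (by linarith) (by norm_num)]
    nlinarith [Real.pi_pos]
  rw [← Real.cos_pi_div_three]
  exact Real.cos_le_cos_of_nonneg_of_le_pi (by positivity) (by linarith [Real.pi_pos]) hθ

theorem dist_le_of_mem_sector {p x u w : ℂ} {k : ℕ} (hk : 6 ≤ k) {R : ℝ}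
    (hu : u ∈ sector p x k) (hw : w ∈ sector p x k) (hpu : dist p u ≤ R) (hpw : dist p w ≤ R) :
    dist u w ≤ R := by
  obtain ⟨a₁, b₁, ha₁, hb₁, rfl⟩ := hu
  obtain ⟨a₂, b₂, ha₂, hb₂, rfl⟩ := hw
  set s := x - p
  set t := rot p (2 * π / k) x - p with ht
  have hst : ‖s‖ = ‖t‖ := by rw [ht, rot_sub_self, norm_mul, norm_exp_ofReal_mul_I, one_mul]
  have hangle : ‖s‖ ^ 2 ≤ 2 * ⟪s, t⟫ := by
    have hinner : ⟪s, t⟫ = Real.cos (2 * π / k) * ‖s‖ ^ 2 := by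
      rw [Complex.inner, ht, rot_sub_self, mul_assoc, mul_conj', ← ofReal_pow, re_mul_ofReal,
        exp_ofReal_mul_I_re]
    nlinarith [half_le_cos_two_pi_div hk, sq_nonneg ‖s‖]
  have hcomb : ∀ a b : ℝ, p + (a : ℂ) * s + (b : ℂ) * t - p = a • s + b • t := fun a b => by
    rw [real_smul, real_smul]; ring
  have hdiff : p + (a₁ : ℂ) * s + (b₁ : ℂ) * t - (p + (a₂ : ℂ) * s + (b₂ : ℂ) * t)
      = (a₁ • s + b₁ • t) - (a₂ • s + b₂ • t) := by
    simp only [real_smul]; ring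
  rw [dist_comm, dist_eq, hcomb] at hpu hpw
  rw [dist_eq, hdiff]
  exact norm_sub_le_of_norm_mul_norm_le_two_mul_inner hpu hpw
    (norm_mul_norm_le_two_mul_inner_of_nonneg_comb hst hangle ha₁ hb₁ ha₂ hb₂)

theorem IsCompact.isGreatest_circumrad {C : Set ℂ} (hC : IsCompact C) (hne : C.Nonempty)
    (p : ℂ) : IsGreatest (dist p '' C) (circumrad C p) := by
  obtain ⟨y, hyC, hy⟩ := hC.exists_isMaxOn hne (continuous_const.dist continuous_id).continuousOn
  have hmax : ∀ z ∈ C, dist p z ≤ dist p y := fun z hz => hy hz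
  have hcirc : circumrad C p = dist p y := by
    refine le_antisymm (Real.iSup_le (fun z => Real.iSup_le (hmax z) dist_nonneg) dist_nonneg) ?_
    refine le_ciSup_of_le ⟨dist p y, ?_⟩ y (by rw [ciSup_pos hyC])
    rintro _ ⟨z, rfl⟩
    exact Real.iSup_le (hmax z) dist_nonneg
  rw [hcirc]
  exact ⟨mem_image_of_mem _ hyC, forall_mem_image.2 hmax⟩

theorem dM_anti {C : Set ℂ} (hC : Bornology.IsBounded C) (p x : ℂ) {m n : ℕ} (hm : 3 ≤ m)
    (hmn : m ≤ n) : dM C p x n ≤ dM C p x m :=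
  diam_mono (inter_subset_inter_right C (sector_anti p x hm hmn)) (hC.subset inter_subset_left)

theorem dM_le_circumrad {C : Set ℂ} (hC : IsCompact C) {p : ℂ} (hpC : p ∈ C) (x : ℂ) {k : ℕ}
    (hk : 6 ≤ k) : dM C p x k ≤ circumrad C p := by
  have hR := (hC.isGreatest_circumrad ⟨p, hpC⟩ p).2
  refine diam_le_of_forall_dist_le (hR (mem_image_of_mem _ hpC) |>.trans' dist_nonneg) ?_
  rintro u ⟨huC, hu⟩ w ⟨hwC, hw⟩
  exact dist_le_of_mem_sector hk hu hw (hR (mem_image_of_mem _ huC)) (hR (mem_image_of_mem _ hwC))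

theorem circumrad_le_dM {C : Set ℂ} (hC : IsCompact C) {p x : ℂ} {k : ℕ} (hpC : p ∈ C)
    (hsym : IsRotSym C p k) (hk : 3 ≤ k) (hxp : x ≠ p) : circumrad C p ≤ dM C p x k := by
  obtain ⟨⟨y, hyC, hy⟩, -⟩ := hC.isGreatest_circumrad ⟨p, hpC⟩ p
  obtain ⟨m, hm⟩ := exists_rot_int_mul_mem_sector hk hxp y
  have hrotC : rot p (m * (2 * π / k)) y ∈ C := hsym.image_rot_int_mul m ▸ mem_image_of_mem _ hyC
  rw [← hy, ← dist_rot p (m * (2 * π / k))]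
  exact dist_le_diam_of_mem (hC.isBounded.subset inter_subset_left) ⟨hpC, self_mem_sector p x k⟩
    ⟨hrotC, hm⟩

theorem dM_eq_circumrad {C : Set ℂ} (hC : IsCompact C) {p x : ℂ} {k : ℕ} (hpC : p ∈ C)
    (hsym : IsRotSym C p k) (hk : 6 ≤ k) (hxp : x ≠ p) : dM C p x k = circumrad C p :=
  (dM_le_circumrad hC hpC x hk).antisymm (circumrad_le_dM hC hpC hsym (by omega) hxp)

theorem stmt_5_general (C : Set ℂ) (p x : ℂ) (kC : ℕ) (hC : IsConvexBody C)
    (hcomp : ¬ kC.Prime) (hmin : 3 ≤ kC.minFac)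
    (hsym : IsRotSym C p kC) (hp : p ∈ interior C)
    (hx : x ∈ frontier C) :
    (∀ a b : ℕ, a ∣ kC → b ∣ kC → 1 < a → 1 < b → dM C p x a = dM C p x b)
      ↔ dM C p x kC.minFac = circumrad C p := by
  have hpC : p ∈ C := interior_subset hp
  have hxp : x ≠ p := fun h => disjoint_left.mp disjoint_interior_frontier hp (h ▸ hx)
  have hkC : 0 < kC := Nat.pos_of_ne_zero (by rintro rfl; simp at hmin)
  have h9 : 9 ≤ kC := by nlinarith [Nat.minFac_sq_le_self hkC hcomp]
  have hχ : 1 < kC.minFac := by omega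
  have htop : dM C p x kC = circumrad C p := dM_eq_circumrad hC.1 hpC hsym (by omega) hxp
  refine ⟨fun h => h _ _ kC.minFac_dvd dvd_rfl hχ (by omega) ▸ htop, fun h a b ha hb ha1 hb1 => ?_⟩
  have hall : ∀ c, c ∣ kC → 1 < c → dM C p x c = circumrad C p := fun c hc hc1 =>
    have hχc : kC.minFac ≤ c := Nat.minFac_le_of_dvd hc1 hc
    le_antisymm (h ▸ dM_anti hC.1.isBounded p x hmin hχc)
      (htop ▸ dM_anti hC.1.isBounded p x (hmin.trans hχc) (Nat.le_of_dvd hkC hc))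
  rw [hall a ha ha1, hall b hb hb1]

/-- For a multi-rotationally symmetric planar convex body with composite maximal
degree `k_C` and minimal degree `χ = minFac k_C ≥ 3`, the values `d_M(P_a)` over
all divisors `a > 1` of `k_C` all coincide iff `d_M(P_χ) = R`. -/
theorem stmt_5 (C : Set ℂ) (p x : ℂ) (kC : ℕ) (hC : IsConvexBody C)
    (hk2 : 2 ≤ kC) (hcomp : ¬ kC.Prime) (hmin : 3 ≤ kC.minFac)
    (hsym : IsRotSym C p kC) (hp : p ∈ interior C)
    (hx : x ∈ frontier C) (hxr : dist p x = infDist p (frontier C)) :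
    (∀ a b : ℕ, a ∣ kC → b ∣ kC → 1 < a → 1 < b → dM C p x a = dM C p x b)
      ↔ dM C p x kC.minFac = circumrad C p :=
  stmt_5_general C p x kC hC hcomp hmin hsym hp hx
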